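/- Let V : [0,∞) → [0,∞) be continuously differentiable and satisfy V'(t) ≤ -α·V(t)^p - β·V(t)^q whenever V(t) > 0, where α, β > 0, 0 < p < 1, and q > 1. Then there exists T_f ≤ 1/(α(1-p)) + 1/(β(q-1)), independent of V(0), such that V(t) = 0 for all t ≥ T_f. -/

import Mathlib

/-!
If `V' ≤ -c V^s` with `s ≠ 1` while `V > 0`, then `V^(1-s)/(1-s) + c t` is nonincreasing.
For `s = q > 1` this forces `V ≤ 1` after time `1/(β(q-1))`, whatever `V 0` is, since
`V^(1-q)/(1-q)` is negative; for `s = p < 1`, starting from `V ≤ 1`, it forces `V` to vanish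
within a further time `1/(α(1-p))`, since `V^(1-p)/(1-p)` is positive. And `V` is
nonincreasing on `[0, ∞)`, so once zero it stays zero.
-/

open Set

theorem antitoneOn_Ici_of_deriv_nonpos_of_pos {V : ℝ → ℝ} {a : ℝ} (hd : Differentiable ℝ V)
    (hnn : ∀ t, a ≤ t → 0 ≤ V t) (hV' : ∀ t, a < t → 0 < V t → deriv V t ≤ 0) :
    AntitoneOn V (Ici a) := by
  refine antitoneOn_of_deriv_nonpos (convex_Ici a) hd.continuous.continuousOn
    hd.differentiableOn fun t ht => ?_
  rw [interior_Ici] at ht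
  rcases (hnn t ht.le).lt_or_eq with hVt | hVt
  · exact hV' t ht hVt
  · have hmin : IsLocalMin V t := by
      filter_upwards [eventually_gt_nhds ht] with s hs
      rw [← hVt]
      exact hnn s hs.le
    rw [hmin.deriv_eq_zero]

section PowerComparison

variable {V : ℝ → ℝ} {a b c s : ℝ}

theorem antitoneOn_rpow_one_sub_div_add_mul (hs : s ≠ 1)
    (hd : ∀ t ∈ Icc a b, DifferentiableAt ℝ V t) (hpos : ∀ t ∈ Icc a b, 0 < V t)
    (hV' : ∀ t ∈ Ioo a b, deriv V t ≤ -c * V t ^ s) :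
    AntitoneOn (fun t => V t ^ (1 - s) / (1 - s) + c * t) (Icc a b) := by
  have hs' : 1 - s ≠ 0 := sub_ne_zero.mpr (Ne.symm hs)
  have hderiv : ∀ t ∈ Icc a b, HasDerivAt (fun t => V t ^ (1 - s) / (1 - s) + c * t)
      (deriv V t * (1 - s) * V t ^ (1 - s - 1) / (1 - s) + c) t := fun t ht =>
    (((hd t ht).hasDerivAt.rpow_const (Or.inl (hpos t ht).ne')).div_const _).add
      (by simpa using (hasDerivAt_id t).const_mul c)
  refine antitoneOn_of_hasDerivWithinAt_nonpos (convex_Icc a b)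
    (fun t ht => (hderiv t ht).continuousAt.continuousWithinAt)
    (fun t ht => (hderiv t (interior_subset ht)).hasDerivWithinAt) fun t ht => ?_
  rw [interior_Icc] at ht
  have hVt := hpos t (Ioo_subset_Icc_self ht)
  have hcancel : V t ^ s * V t ^ (1 - s - 1) = 1 := by
    rw [← Real.rpow_add hVt]
    norm_num
  calc deriv V t * (1 - s) * V t ^ (1 - s - 1) / (1 - s) + c
      = deriv V t * V t ^ (1 - s - 1) + c := by field_simp
    _ ≤ -c * V t ^ s * V t ^ (1 - s - 1) + c := by
      gcongr
      exact hV' t ht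
    _ = 0 := by rw [mul_assoc, hcancel]; ring

theorem le_one_of_deriv_le_neg_mul_rpow_of_one_lt (hs : 1 < s) (hc : 0 < c)
    (hT : 1 / (c * (s - 1)) ≤ b - a)
    (hd : ∀ t ∈ Icc a b, DifferentiableAt ℝ V t) (hpos : ∀ t ∈ Icc a b, 0 < V t)
    (hV' : ∀ t ∈ Ioo a b, deriv V t ≤ -c * V t ^ s) :
    V b ≤ 1 := by
  have hs1 : 0 < s - 1 := sub_pos.mpr hs
  have hab : a ≤ b := by
    have : 0 < 1 / (c * (s - 1)) := by positivity
    linarith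
  have hmono := antitoneOn_rpow_one_sub_div_add_mul hs.ne' hd hpos hV'
    (left_mem_Icc.mpr hab) (right_mem_Icc.mpr hab) hab
  have hVa : 0 < V a ^ (1 - s) := Real.rpow_pos_of_pos (hpos a (left_mem_Icc.mpr hab)) _
  have hgain : c * (s - 1) * (b - a) ≤ V b ^ (1 - s) - V a ^ (1 - s) := by
    have e : ∀ z, z / (1 - s) = -(z / (s - 1)) := fun z => by rw [← div_neg, neg_sub]
    simp only [e] at hmono
    have : c * (b - a) ≤ (V b ^ (1 - s) - V a ^ (1 - s)) / (s - 1) := by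
      rw [sub_div]; linarith
    rwa [le_div_iff₀ hs1, mul_right_comm] at this
  have hT' : 1 ≤ c * (s - 1) * (b - a) := by rwa [div_le_iff₀' (by positivity)] at hT
  by_contra! hgt
  have := Real.rpow_lt_one_of_one_lt_of_neg hgt (by linarith : 1 - s < 0)
  linarith

theorem not_forall_pos_of_deriv_le_neg_mul_rpow_of_lt_one (hs : s < 1) (hc : 0 < c)
    (hT : 1 / (c * (1 - s)) ≤ b - a) (hd : ∀ t ∈ Icc a b, DifferentiableAt ℝ V t)
    (ha : V a ≤ 1) (hV' : ∀ t ∈ Ioo a b, deriv V t ≤ -c * V t ^ s) :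
    ¬ ∀ t ∈ Icc a b, 0 < V t := by
  intro hpos
  have hs1 : 0 < 1 - s := sub_pos.mpr hs
  have hab : a ≤ b := by
    have : 0 < 1 / (c * (1 - s)) := by positivity
    linarith
  have hmono := antitoneOn_rpow_one_sub_div_add_mul hs.ne hd hpos hV'
    (left_mem_Icc.mpr hab) (right_mem_Icc.mpr hab) hab
  have hdrop : c * (1 - s) * (b - a) ≤ V a ^ (1 - s) - V b ^ (1 - s) := by
    have : c * (b - a) ≤ (V a ^ (1 - s) - V b ^ (1 - s)) / (1 - s) := by
      rw [sub_div]; simp only at hmono; linarith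
    rwa [le_div_iff₀ hs1, mul_right_comm] at this
  have hT' : 1 ≤ c * (1 - s) * (b - a) := by rwa [div_le_iff₀' (by positivity)] at hT
  have hVa : V a ^ (1 - s) ≤ 1 := Real.rpow_le_one (hpos a (left_mem_Icc.mpr hab)).le ha hs1.le
  have hVb : 0 < V b ^ (1 - s) := Real.rpow_pos_of_pos (hpos b (right_mem_Icc.mpr hab)) _
  linarith

end PowerComparison

theorem fixed_time_stability_general (V : ℝ → ℝ) (α β p q : ℝ)
    (hα : 0 < α) (hβ : 0 < β) (hp1 : p < 1) (hq : 1 < q)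
    (hC1 : ContDiff ℝ 1 V)
    (hnn : ∀ t, 0 ≤ t → 0 ≤ V t)
    (hineq : ∀ t, 0 ≤ t → 0 < V t → deriv V t ≤ -α * V t ^ p - β * V t ^ q) :
    ∃ Tf : ℝ, Tf ≤ 1 / (α * (1 - p)) + 1 / (β * (q - 1)) ∧
      ∀ t, Tf ≤ t → V t = 0 := by
  have hd : Differentiable ℝ V := hC1.differentiable one_ne_zero
  have hsplit : ∀ t, 0 ≤ t → 0 < V t → deriv V t ≤ -α * V t ^ p ∧ deriv V t ≤ -β * V t ^ q :=
    fun t ht hVt => by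
      have := hineq t ht hVt
      constructor <;> nlinarith [Real.rpow_pos_of_pos hVt p, Real.rpow_pos_of_pos hVt q]
  have hanti : AntitoneOn V (Ici 0) := antitoneOn_Ici_of_deriv_nonpos_of_pos hd hnn
    fun t ht hVt => (hsplit t ht.le hVt).1.trans
      (by have := Real.rpow_pos_of_pos hVt p; nlinarith)
  set T₁ := 1 / (β * (q - 1))
  set T₂ := 1 / (α * (1 - p))
  have hT₁ : 0 < T₁ := by have := sub_pos.mpr hq; positivity
  have hT₂ : 0 < T₂ := by have := sub_pos.mpr hp1; positivity
  refine ⟨T₂ + T₁, le_rfl, fun t ht => ?_⟩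
  by_contra hne
  have hVt : 0 < V t := (hnn t (by linarith)).lt_of_ne' hne
  have hpos : ∀ s ∈ Icc 0 (T₂ + T₁), 0 < V s := fun s hs =>
    hVt.trans_le (hanti hs.1 (mem_Ici.mpr (by linarith)) (hs.2.trans ht))
  have hrate : ∀ s ∈ Icc 0 (T₂ + T₁), deriv V s ≤ -α * V s ^ p ∧ deriv V s ≤ -β * V s ^ q :=
    fun s hs => hsplit s hs.1 (hpos s hs)
  have h₁ : Icc 0 T₁ ⊆ Icc 0 (T₂ + T₁) := Icc_subset_Icc_right (by linarith)
  have h₂ : Icc T₁ (T₂ + T₁) ⊆ Icc 0 (T₂ + T₁) := Icc_subset_Icc_left hT₁.le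
  have hlevel : V T₁ ≤ 1 := le_one_of_deriv_le_neg_mul_rpow_of_one_lt hq hβ (sub_zero T₁).ge
    (fun s _ => hd s) (fun s hs => hpos s (h₁ hs))
    (fun s hs => (hrate s (h₁ (Ioo_subset_Icc_self hs))).2)
  exact not_forall_pos_of_deriv_le_neg_mul_rpow_of_lt_one hp1 hα
    (add_sub_cancel_right T₂ T₁).ge (fun s _ => hd s) hlevel
    (fun s hs => (hrate s (h₂ (Ioo_subset_Icc_self hs))).1) fun s hs => hpos s (h₂ hs)

/-- Fixed-time stability (Polyakov): if `V ≥ 0` is continuously differentiable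
and `V'(t) ≤ -α V(t)^p - β V(t)^q` whenever `V(t) > 0`, with `α, β > 0`,
`0 < p < 1 < q`, then there is a settling time
`T_f ≤ 1/(α(1-p)) + 1/(β(q-1))`, independent of `V 0`, with `V t = 0` for all
`t ≥ T_f`. -/
theorem fixed_time_stability (V : ℝ → ℝ) (α β p q : ℝ)
    (hα : 0 < α) (hβ : 0 < β) (hp : 0 < p) (hp1 : p < 1) (hq : 1 < q)
    (hC1 : ContDiff ℝ 1 V)
    (hnn : ∀ t, 0 ≤ t → 0 ≤ V t)
    (hineq : ∀ t, 0 ≤ t → 0 < V t → deriv V t ≤ -α * V t ^ p - β * V t ^ q) :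
    ∃ Tf : ℝ, Tf ≤ 1 / (α * (1 - p)) + 1 / (β * (q - 1)) ∧
      ∀ t, Tf ≤ t → V t = 0 :=
  fixed_time_stability_general V α β p q hα hβ hp1 hq hC1 hnn hineq
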